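/- Define β_1 = 1, β_2 = 5/2, β_3 = 9/2, β_4 = 27/4, and β_i = (9/4)(i−1) − Σ_{j=6}^{i+1} 1/(2j) for i ≥ 5. Let s, t and i ≥ 4 be integers with s + t = i and 2 ≤ s ≤ t ≤ i − 2. Then β_i ≥ β_s + β_t + (2i−1)/i. -/
import Mathlib


/-- The rationals `β_i`: `β 1 = 1`, `β 2 = 5/2`, `β 3 = 9/2`, `β 4 = 27/4`,
and `β i = (9/4)(i-1) - ∑_{j=6}^{i+1} 1/(2j)` for `i ≥ 5`. -/
def betaSeq : ℕ → ℚ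
  | 1 => 1
  | 2 => 5 / 2
  | 3 => 9 / 2
  | 4 => 27 / 4
  | i => (9 / 4 : ℚ) * ((i : ℚ) - 1) - ∑ j ∈ Finset.Icc 6 (i + 1), 1 / (2 * (j : ℚ))

/-- The tail sum appearing in the definition of `betaSeq`. -/
def sAux (k : ℕ) : ℚ := ∑ j ∈ Finset.Icc 6 (k + 1), 1 / (2 * (j : ℚ))

lemma betaSeq_eq (k : ℕ) (hk : 3 ≤ k) :
    betaSeq k = (9 / 4 : ℚ) * ((k : ℚ) - 1) - sAux k := by
  obtain ⟨n, rfl⟩ : ∃ n, k = n + 3 := ⟨k - 3, by omega⟩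
  match n with
  | 0 =>
    have h : betaSeq 3 = 9 / 2 := rfl
    have h2 : sAux 3 = 0 := by
      rw [sAux, show Finset.Icc 6 4 = ∅ from rfl, Finset.sum_empty]
    rw [h, h2]; norm_num
  | 1 =>
    have h : betaSeq 4 = 27 / 4 := rfl
    have h2 : sAux 4 = 0 := by
      rw [sAux, show Finset.Icc 6 5 = ∅ from rfl, Finset.sum_empty]
    rw [h, h2]; norm_num
  | (m + 2) => rfl

lemma sAux_le (s t : ℕ) :
    sAux (s + t) ≤ sAux t + (s : ℚ) / (2 * ((t : ℚ) + 2)) := by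
  have hsub : Finset.Icc 6 (s + t + 1) ⊆
      Finset.Icc 6 (t + 1) ∪ Finset.Icc (t + 2) (s + t + 1) := by
    intro j hj
    simp only [Finset.mem_Icc, Finset.mem_union] at hj ⊢
    omega
  have hdisj : Disjoint (Finset.Icc 6 (t + 1)) (Finset.Icc (t + 2) (s + t + 1)) := by
    rw [Finset.disjoint_left]
    intro j hj hj'
    simp only [Finset.mem_Icc] at hj hj'
    omega
  have h1 : sAux (s + t) ≤ sAux t + ∑ j ∈ Finset.Icc (t + 2) (s + t + 1), 1 / (2 * (j : ℚ)) := by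
    rw [sAux, sAux, ← Finset.sum_union hdisj]
    refine Finset.sum_le_sum_of_subset_of_nonneg hsub ?_
    intro j _ _
    positivity
  have h2 : ∑ j ∈ Finset.Icc (t + 2) (s + t + 1), 1 / (2 * (j : ℚ))
      ≤ (s : ℚ) / (2 * ((t : ℚ) + 2)) := by
    have hcard : (Finset.Icc (t + 2) (s + t + 1)).card = s := by
      rw [Nat.card_Icc]; omega
    calc ∑ j ∈ Finset.Icc (t + 2) (s + t + 1), 1 / (2 * (j : ℚ))
        ≤ ∑ _j ∈ Finset.Icc (t + 2) (s + t + 1), 1 / (2 * ((t : ℚ) + 2)) := by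
          refine Finset.sum_le_sum ?_
          intro j hj
          simp only [Finset.mem_Icc] at hj
          have hjt : ((t : ℚ) + 2) ≤ (j : ℚ) := by exact_mod_cast hj.1
          apply one_div_le_one_div_of_le (by positivity)
          linarith
      _ = (s : ℚ) / (2 * ((t : ℚ) + 2)) := by
          rw [Finset.sum_const, hcard, nsmul_eq_mul]
          ring
  linarith

lemma sAux_ge (s : ℕ) : ((s : ℚ) - 4) / (2 * ((s : ℚ) + 2)) ≤ sAux s := by
  rcases le_or_gt s 4 with h | h
  · have h0 : sAux s = 0 := by
      rw [sAux, Finset.Icc_eq_empty (by omega), Finset.sum_empty]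
    rw [h0]
    apply div_nonpos_of_nonpos_of_nonneg
    · have : (s : ℚ) ≤ 4 := by exact_mod_cast h
      linarith
    · positivity
  · have hcard : (Finset.Icc 6 (s + 1)).card = s - 4 := by
      rw [Nat.card_Icc]; omega
    have h2 : ∑ _j ∈ Finset.Icc 6 (s + 1), 1 / (2 * ((s : ℚ) + 2))
        ≤ sAux s := by
      refine Finset.sum_le_sum ?_
      intro j hj
      simp only [Finset.mem_Icc] at hj
      have hj1 : (j : ℚ) ≤ (s : ℚ) + 1 := by exact_mod_cast hj.2
      have hj6 : (6 : ℚ) ≤ (j : ℚ) := by exact_mod_cast hj.1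
      apply one_div_le_one_div_of_le (by linarith)
      linarith
    have h3 : ∑ _j ∈ Finset.Icc 6 (s + 1), 1 / (2 * ((s : ℚ) + 2))
        = ((s : ℚ) - 4) / (2 * ((s : ℚ) + 2)) := by
      rw [Finset.sum_const, hcard, nsmul_eq_mul]
      have h4 : ((s - 4 : ℕ) : ℚ) = (s : ℚ) - 4 := by
        have h5 : (4 : ℕ) ≤ s := by omega
        push_cast [h5]; ring
      rw [h4]; ring
    linarith

/-- For integers `i ≥ 4` and `s, t` with `s + t = i` and `2 ≤ s ≤ t ≤ i - 2`, we
have `β i ≥ β s + β t + (2i - 1)/i`. -/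
theorem betaSeq_superadditive (i s t : ℕ) (hi : 4 ≤ i) (hst : s + t = i)
    (hs : 2 ≤ s) (hst' : s ≤ t) (ht : t ≤ i - 2) :
    betaSeq s + betaSeq t + (2 * (i : ℚ) - 1) / (i : ℚ) ≤ betaSeq i := by
  subst hst
  have hX2 : (2 : ℚ) ≤ (s : ℚ) := by exact_mod_cast hs
  have hYX : (s : ℚ) ≤ (t : ℚ) := by exact_mod_cast hst'
  have hXY : ((s + t : ℕ) : ℚ) = (s : ℚ) + (t : ℚ) := by push_cast; ring
  have hIpos : (0 : ℚ) < (s : ℚ) + (t : ℚ) := by linarith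
  have he : (2 * ((s + t : ℕ) : ℚ) - 1) / ((s + t : ℕ) : ℚ)
      = 2 - 1 / ((s : ℚ) + (t : ℚ)) := by
    rw [hXY]; field_simp
  rcases eq_or_lt_of_le hs with h2 | h3
  · -- s = 2
    rcases eq_or_lt_of_le hst' with h2t | h3t
    · -- s = t = 2
      rw [← h2, ← h2t, ← h2]
      norm_num [show betaSeq 2 = 5/2 from rfl, show betaSeq 4 = 27/4 from rfl]
    · -- s = 2, t ≥ 3
      have ht3 : 3 ≤ t := by omega
      have hbt := betaSeq_eq t ht3
      have hbi := betaSeq_eq (s + t) (by omega)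
      have hA := sAux_le s t
      have hbs : betaSeq s = 5 / 2 := by rw [← h2]; rfl
      have hX2' : (s : ℚ) = 2 := by rw [← h2]; norm_num
      have hfr : (s : ℚ) / (2 * ((t : ℚ) + 2)) = 1 / ((s : ℚ) + (t : ℚ)) := by
        rw [hX2', div_eq_div_iff (by linarith) (by linarith)]
        ring
      rw [hbs, hbt, hbi, he, hXY]
      rw [hfr] at hA
      linarith
  · -- s ≥ 3
    have hs3 : 3 ≤ s := by omega
    have hX3 : (3 : ℚ) ≤ (s : ℚ) := by exact_mod_cast hs3
    have hbs := betaSeq_eq s hs3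
    have hbt := betaSeq_eq t (by omega)
    have hbi := betaSeq_eq (s + t) (by omega)
    have hA := sAux_le s t
    have hC := sAux_ge s
    set X : ℚ := (s : ℚ)
    set Y : ℚ := (t : ℚ)
    have key : X / (2 * (Y + 2)) - (X - 4) / (2 * (X + 2)) ≤ 1 / 4 + 1 / (X + Y) := by
      rw [div_sub_div _ _ (by positivity : (2 * (Y + 2) : ℚ) ≠ 0)
        (by positivity : (2 * (X + 2) : ℚ) ≠ 0),
        div_add_div _ _ (by norm_num : (4 : ℚ) ≠ 0) hIpos.ne',
        div_le_div_iff₀ (by positivity) (by positivity)]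
      nlinarith [mul_nonneg (sub_nonneg.mpr hYX) (sub_nonneg.mpr hX3),
        mul_nonneg (mul_nonneg (sub_nonneg.mpr hYX) (sub_nonneg.mpr hX3)) hIpos.le,
        sq_nonneg (X - 3), sq_nonneg (Y - 3), mul_pos hIpos hIpos,
        mul_nonneg (sub_nonneg.mpr hX3) (sub_nonneg.mpr hX3)]
    rw [hbs, hbt, hbi, he, hXY]
    linarith
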